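/- arXiv:2503.09478 — 7 statements merged into one kernel-verified Lean document; each statement's English description precedes it below -/
import Mathlib

section
/- Let q > 1, Q > 0, and let (ξ_k) be a sequence of positive reals converging to 0 with lim_{k→∞} ξ_{k+1}/ξ_k^q = Q. Then there exist constants s > 0 and 0 < c_1 ≤ c_2 such that c_1 e^{−s q^k} ≤ ξ_k ≤ c_2 e^{−s q^k} for all sufficiently large k. -/
open Filter Topology

/-- Q-superlinear of order `q > 1` implies UP-order `q`:
`ξ k = Θ(e^{-s q^k})` for some `s > 0`. -/
theorem q_superlinear_implies_up
    (q : ℝ) (hq : 1 < q) (Q : ℝ) (hQ : 0 < Q)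
    (ξ : ℕ → ℝ) (hξpos : ∀ k, 0 < ξ k)
    (hξ0 : Tendsto ξ atTop (𝓝 0))
    (hratio : Tendsto (fun k => ξ (k + 1) / (ξ k) ^ q) atTop (𝓝 Q)) :
    ∃ s > 0, ∃ c₁ c₂ : ℝ, 0 < c₁ ∧ c₁ ≤ c₂ ∧
      ∀ᶠ k : ℕ in atTop,
        c₁ * Real.exp (-s * q ^ k) ≤ ξ k ∧ ξ k ≤ c₂ * Real.exp (-s * q ^ k) := by
  have hq0 : (0:ℝ) < q := lt_trans one_pos hq
  have hq1 : (0:ℝ) < q - 1 := by linarith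
  set P : ℝ := Real.log Q / (q - 1) with hPdef
  set r : ℕ → ℝ := fun k => Real.log (ξ (k+1) / ξ k ^ q) with hrdef
  have hr : Tendsto r atTop (𝓝 (Real.log Q)) :=
    (Real.continuousAt_log hQ.ne').tendsto.comp hratio
  set u : ℕ → ℝ := fun k => Real.log (ξ k) with hudef
  have hu : ∀ k, u (k+1) = q * u k + r k := by
    intro k
    have h1 : r k = Real.log (ξ (k+1)) - Real.log (ξ k ^ q) :=
      Real.log_div (hξpos _).ne' (Real.rpow_pos_of_pos (hξpos k) q).ne'
    rw [Real.log_rpow (hξpos k)] at h1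
    simp only [u]
    linarith
  set d : ℕ → ℝ := fun k => (r k - Real.log Q) / q ^ (k+1) with hddef
  set v : ℕ → ℝ := fun k => (u k + P) / q ^ k with hvdef
  have hqk : ∀ k:ℕ, (0:ℝ) < q ^ k := fun k => pow_pos hq0 k
  have hP' : Real.log Q = (q - 1) * P := by
    rw [hPdef, mul_div_assoc', mul_comm, mul_div_assoc, div_self hq1.ne', mul_one]
  have hv : ∀ k, v (k+1) = v k + d k := by
    intro k
    simp only [v, d, hu k, hP', pow_succ]
    have h1 : q ^ k ≠ 0 := (hqk k).ne'
    field_simp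
    ring
  have hvsum : ∀ k, v k = v 0 + ∑ j ∈ Finset.range k, d j := by
    intro k
    induction k with
    | zero => simp
    | succ n ih => rw [hv n, ih, Finset.sum_range_succ]; ring
  -- K such that |r j - log Q| ≤ 1 for j ≥ K
  obtain ⟨K, hK⟩ : ∃ K, ∀ j ≥ K, |r j - Real.log Q| ≤ 1 := by
    obtain ⟨N, hN⟩ := Metric.tendsto_atTop.mp hr 1 one_pos
    exact ⟨N, fun j hj => le_of_lt (by simpa [Real.dist_eq] using hN j hj)⟩
  have hqinv0 : (0:ℝ) ≤ 1/q := by positivity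
  have hqinv1 : (1/q : ℝ) < 1 := by rw [div_lt_one hq0]; exact hq
  have hgeo : Summable (fun k:ℕ => (1/q:ℝ)^k) := summable_geometric_of_lt_one hqinv0 hqinv1
  have hdbound : ∀ j, K ≤ j → |d j| ≤ (1/q)^(j+1) := by
    intro j hj
    have : |d j| = |r j - Real.log Q| / q^(j+1) := by
      rw [hddef]
      rw [abs_div, abs_of_pos (hqk (j+1))]
    rw [this, div_pow, one_pow]
    rw [div_le_div_iff₀ (hqk (j+1)) (hqk (j+1))]
    nlinarith [hK j hj, hqk (j+1), abs_nonneg (r j - Real.log Q)]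
  have hsum : Summable d := by
    apply Summable.of_norm_bounded_eventually_nat hgeo
    filter_upwards [eventually_ge_atTop K] with j hj
    rw [Real.norm_eq_abs]
    calc |d j| ≤ (1/q)^(j+1) := hdbound j hj
      _ ≤ (1/q)^j := pow_le_pow_of_le_one hqinv0 hqinv1.le (Nat.le_succ j)
  set L : ℝ := v 0 + ∑' j, d j with hLdef
  have htail : ∀ k, K ≤ k → |L - v k| ≤ (1/(q-1)) * (1/q)^k := by
    intro k hk
    have hsumtail : Summable (fun j => d (j + k)) := (summable_nat_add_iff k).mpr hsum
    have hL' : L - v k = ∑' j, d (j + k) := by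
      rw [hvsum k, hLdef]
      have h := hsum.sum_add_tsum_nat_add k
      linarith [h]
    have hg : Summable (fun j:ℕ => (1/q:ℝ)^(j+k+1)) := by
      have := hgeo.mul_right ((1/q:ℝ)^(k+1))
      apply this.congr
      intro j
      rw [← pow_add, add_assoc]
    have habs : Summable (fun j => |d (j + k)|) := hsumtail.abs
    have hb : ∀ j, |d (j + k)| ≤ (1/q:ℝ)^(j+k+1) :=
      fun j => hdbound (j+k) (le_trans hk (Nat.le_add_left k j))
    have h1 : |∑' j, d (j + k)| ≤ ∑' j:ℕ, (1/q:ℝ)^(j+k+1) := by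
      calc |∑' j, d (j + k)| ≤ ∑' j, |d (j + k)| := by
            simpa using norm_tsum_le_tsum_norm (f := fun j => d (j + k)) habs
        _ ≤ ∑' j:ℕ, (1/q:ℝ)^(j+k+1) := Summable.tsum_le_tsum hb habs hg
    have h2 : ∑' j:ℕ, (1/q:ℝ)^(j+k+1) = (1/(q-1)) * (1/q)^k := by
      have h3 : ∀ j:ℕ, (1/q:ℝ)^(j+k+1) = (1/q:ℝ)^j * (1/q)^(k+1) := by
        intro j
        rw [← pow_add, add_assoc]
      rw [tsum_congr h3, tsum_mul_right, tsum_geometric_of_lt_one hqinv0 hqinv1]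
      rw [pow_succ]
      field_simp
    rw [hL', ← h2]
    exact h1
  have hw : ∀ k, K ≤ k → |(u k + P) - L * q^k| ≤ 1/(q-1) := by
    intro k hk
    have h1 : u k + P = v k * q ^ k := by
      rw [hvdef]; field_simp
    have h2 : |(u k + P) - L * q^k| = |L - v k| * q^k := by
      rw [h1, abs_sub_comm]
      have he : L * q ^ k - v k * q ^ k = (L - v k) * q ^ k := by ring
      rw [he, abs_mul, abs_of_pos (hqk k)]
    rw [h2]
    have h3 := htail k hk
    have h4 : (1/(q-1)) * (1/q)^k * q^k = 1/(q-1) := by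
      have : (1/q:ℝ)^k * q^k = 1 := by
        rw [div_pow, one_pow, div_mul_cancel₀]
        exact (hqk k).ne'
      rw [mul_assoc, this, mul_one]
    calc |L - v k| * q^k ≤ (1/(q-1)) * (1/q)^k * q^k :=
          mul_le_mul_of_nonneg_right h3 (hqk k).le
      _ = 1/(q-1) := h4
  -- L < 0
  have hLneg : L < 0 := by
    obtain ⟨k₀, hk₀K, hk₀⟩ : ∃ k₀, K ≤ k₀ ∧ ξ k₀ < Real.exp (-P - 1/(q-1) - 1) := by
      have h : ∀ᶠ k in atTop, ξ k < Real.exp (-P - 1/(q-1) - 1) :=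
        hξ0.eventually_lt_const (Real.exp_pos (-P - 1/(q-1) - 1))
      obtain ⟨N, hN⟩ := (h.and (eventually_ge_atTop K)).exists
      exact ⟨N, hN.2, hN.1⟩
    have hu0 : u k₀ < -P - 1/(q-1) - 1 := by
      have := Real.log_lt_log (hξpos k₀) hk₀
      rwa [Real.log_exp] at this
    have h1 := hw k₀ hk₀K
    clear_value P L
    have h2 : L * q ^ k₀ ≤ (u k₀ + P) + 1/(q-1) := by
      have := abs_le.mp h1
      linarith [this.2]
    have h3 : L * q ^ k₀ ≤ -1 := by nlinarith [hu0, h2]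
    nlinarith [hqk k₀]
  refine ⟨-L, by linarith, Real.exp (-P - 1/(q-1)), Real.exp (-P + 1/(q-1)),
    Real.exp_pos _, Real.exp_le_exp.mpr (by nlinarith [one_div_pos.mpr hq1]), ?_⟩
  filter_upwards [eventually_ge_atTop K] with k hk
  have hb := abs_le.mp (hw k hk)
  have hxeq : ξ k = Real.exp (u k) := (Real.exp_log (hξpos k)).symm
  have hneg : -(-L) * q ^ k = L * q ^ k := by ring
  constructor
  · rw [hxeq, hneg, ← Real.exp_add]
    exact Real.exp_le_exp.mpr (by linarith [hb.1])
  · rw [hxeq, hneg, ← Real.exp_add]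
    exact Real.exp_le_exp.mpr (by linarith [hb.2])
end

section
/- Let q > 1 and let (ξ_k) be positive reals with ξ_k → 0 satisfying the two-sided bound α ξ_k^q ≤ ξ_{k+1} ≤ β ξ_k^q for all k, with constants 0 < α ≤ β. Then there exist s > 0 and constants 0 < c_1 ≤ c_2 with c_1 e^{−s q^k} ≤ ξ_k ≤ c_2 e^{−s q^k} for all k. -/
open Filter Topology

/-- EQ-order `q > 1` (two-sided ratio bounds) implies UP-order `q`. -/
theorem eq_order_implies_up
    (q : ℝ) (hq : 1 < q)
    (α β : ℝ) (hα : 0 < α) (hαβ : α ≤ β)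
    (ξ : ℕ → ℝ) (hξpos : ∀ k, 0 < ξ k)
    (hξ0 : Tendsto ξ atTop (𝓝 0))
    (hbound : ∀ k, α * (ξ k) ^ q ≤ ξ (k + 1) ∧ ξ (k + 1) ≤ β * (ξ k) ^ q) :
    ∃ s > 0, ∃ c₁ c₂ : ℝ, 0 < c₁ ∧ c₁ ≤ c₂ ∧
      ∀ k : ℕ, c₁ * Real.exp (-s * q ^ k) ≤ ξ k ∧ ξ k ≤ c₂ * Real.exp (-s * q ^ k) := by
  have hq0 : (0:ℝ) < q := by linarith
  have hβ : (0:ℝ) < β := lt_of_lt_of_le hα hαβ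
  have hqpow : ∀ n : ℕ, (0:ℝ) < q ^ n := fun n => pow_pos hq0 n
  -- log bounds
  have hlog : ∀ k, Real.log α ≤ Real.log (ξ (k+1)) - q * Real.log (ξ k) ∧
      Real.log (ξ (k+1)) - q * Real.log (ξ k) ≤ Real.log β := by
    intro k
    have hx := hξpos k
    have hrp : (0:ℝ) < (ξ k) ^ q := Real.rpow_pos_of_pos hx q
    obtain ⟨h1, h2⟩ := hbound k
    have l1 : Real.log (α * (ξ k) ^ q) ≤ Real.log (ξ (k+1)) :=
      Real.log_le_log (by positivity) h1
    have l2 : Real.log (ξ (k+1)) ≤ Real.log (β * (ξ k) ^ q) :=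
      Real.log_le_log (hξpos (k+1)) h2
    rw [Real.log_mul (ne_of_gt hα) (ne_of_gt hrp), Real.log_rpow hx] at l1
    rw [Real.log_mul (ne_of_gt hβ) (ne_of_gt hrp), Real.log_rpow hx] at l2
    constructor <;> linarith
  set M : ℝ := max |Real.log α| |Real.log β| with hM
  have hM0 : 0 ≤ M := le_trans (abs_nonneg _) (le_max_left _ _)
  set L : ℕ → ℝ := fun k => -(Real.log (ξ k)) / q ^ k with hL
  have hr1 : 1 / q < 1 := by
    rw [div_lt_one hq0]; exact hq
  -- geometric bound on successive differences
  have hdist : ∀ n, dist (L n) (L (n+1)) ≤ (M / q) * (1/q) ^ n := by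
    intro n
    have hnum : |Real.log (ξ (n+1)) - q * Real.log (ξ n)| ≤ M := by
      obtain ⟨h1, h2⟩ := hlog n
      rw [abs_le]
      constructor
      · have : -|Real.log α| ≤ Real.log α := neg_abs_le _
        have hMα : |Real.log α| ≤ M := le_max_left _ _
        linarith
      · have : Real.log β ≤ |Real.log β| := le_abs_self _
        have hMβ : |Real.log β| ≤ M := le_max_right _ _
        linarith
    have hdiff : L n - L (n+1) = (Real.log (ξ (n+1)) - q * Real.log (ξ n)) / q ^ (n+1) := by
      simp only [hL]
      field_simp
      ring
    rw [Real.dist_eq, hdiff, abs_div, abs_of_pos (hqpow (n+1))]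
    rw [div_le_iff₀ (hqpow (n+1))]
    calc |Real.log (ξ (n+1)) - q * Real.log (ξ n)| ≤ M := hnum
      _ = M / q * (1/q)^n * q^(n+1) := by
          rw [div_pow, one_pow, pow_succ]
          field_simp
  have hcauchy : CauchySeq L := cauchySeq_of_le_geometric (1/q) (M/q) hr1 hdist
  obtain ⟨s, hs⟩ := cauchySeq_tendsto_of_complete hcauchy
  set D : ℝ := M / (q - 1) with hD
  have hD0 : 0 ≤ D := div_nonneg hM0 (by linarith)
  have hdistlim : ∀ n, dist (L n) s ≤ D / q ^ n := by
    intro n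
    have := dist_le_of_le_geometric_of_tendsto (1/q) (M/q) hr1 hdist hs n
    have hq1 : q - 1 ≠ 0 := by linarith
    have e : (M/q) * (1/q)^n / (1-1/q) = M / ((q-1) * q^n) := by
      rw [div_pow, one_pow, show (1:ℝ) - 1/q = (q-1)/q from by field_simp]
      field_simp
    have e2 : D / q^n = M / ((q-1)*q^n) := by rw [hD, div_div]
    calc dist (L n) s ≤ (M/q) * (1/q)^n / (1 - 1/q) := this
      _ = D / q ^ n := by rw [e, e2]
  -- main two-sided bound on log ξ k
  have hkey : ∀ k, |Real.log (ξ k) + s * q ^ k| ≤ D := by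
    intro k
    have h := hdistlim k
    rw [Real.dist_eq] at h
    simp only [hL] at h
    have hq' : (0:ℝ) < q ^ k := hqpow k
    have h3 : |(-Real.log (ξ k) / q ^ k - s) * q ^ k| ≤ D := by
      rw [abs_mul, abs_of_pos hq']
      calc |(-Real.log (ξ k) / q ^ k - s)| * q ^ k ≤ D / q ^ k * q ^ k :=
            mul_le_mul_of_nonneg_right h hq'.le
        _ = D := div_mul_cancel₀ D (ne_of_gt hq')
    have heq : (-Real.log (ξ k) / q ^ k - s) * q ^ k = -(Real.log (ξ k) + s * q ^ k) := by
      field_simp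
      ring
    rwa [heq, abs_neg] at h3
  -- s > 0
  have hspos : 0 < s := by
    have hev : ∀ᶠ k in atTop, ξ k < Real.exp (-(D+1)) :=
      hξ0.eventually (gt_mem_nhds (Real.exp_pos _))
    obtain ⟨k, hk⟩ := hev.exists
    have hlogk : Real.log (ξ k) < -(D+1) := by
      have := Real.log_lt_log (hξpos k) hk
      rwa [Real.log_exp] at this
    have h := hkey k
    rw [abs_le] at h
    have hq' : (0:ℝ) < q ^ k := hqpow k
    -- -D ≤ log ξ k + s q^k  and  log ξ k < -(D+1)  ⇒ s q^k > 1
    nlinarith [h.1]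
  refine ⟨s, hspos, Real.exp (-D), Real.exp D, Real.exp_pos _,
    Real.exp_le_exp.mpr (by linarith), fun k => ?_⟩
  have h := hkey k
  rw [abs_le] at h
  constructor
  · rw [← Real.exp_add]
    calc Real.exp (-D + -s * q ^ k) ≤ Real.exp (Real.log (ξ k)) := by
          apply Real.exp_le_exp.mpr; linarith [h.1]
      _ = ξ k := Real.exp_log (hξpos k)
  · rw [← Real.exp_add]
    calc ξ k = Real.exp (Real.log (ξ k)) := (Real.exp_log (hξpos k)).symm
      _ ≤ Real.exp (D + -s * q ^ k) := by
          apply Real.exp_le_exp.mpr; linarith [h.2]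
end

section
/- Let C ∈ (0,1) and define ξ_k = C^k · k^{(−1)^k} for k ≥ 1. Then lim_{k→∞} ξ_k^{1/k} = C, but the ratio sequence ξ_{k+1}/ξ_k is unbounded (so the sequence is QUP-linear but not Q-linear and not EQ-linear). -/
open Filter Topology

lemma aux_log_div : Tendsto (fun k : ℕ => Real.log k / (k : ℝ)) atTop (𝓝 0) :=
  (Real.isLittleO_log_id_atTop.tendsto_div_nhds_zero).comp tendsto_natCast_atTop_atTop

/-- `ξ k = C^k k^{(-1)^k}` is QUP-linear with base `C`, but its successive ratio
sequence is unbounded, so it is neither Q-linear nor EQ-linear. -/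
theorem qup_linear_not_q_linear
    (C : ℝ) (hC0 : 0 < C) (hC1 : C < 1) :
    (Tendsto (fun k : ℕ => (C ^ (k : ℕ) * (k : ℝ) ^ ((-1 : ℝ) ^ k)) ^ (1 / (k : ℝ)))
      atTop (𝓝 C)) ∧
    ¬ ∃ M : ℝ, ∀ k : ℕ, 1 ≤ k →
        (C ^ (k + 1 : ℕ) * ((k : ℝ) + 1) ^ ((-1 : ℝ) ^ (k + 1))) /
          (C ^ (k : ℕ) * (k : ℝ) ^ ((-1 : ℝ) ^ k)) ≤ M := by
  constructor
  · -- tendsto part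
    have hlog : Tendsto (fun k : ℕ => (-1 : ℝ) ^ k * (Real.log k / (k : ℝ))) atTop (𝓝 0) := by
      apply squeeze_zero_norm _ aux_log_div
      intro k
      rcases Nat.eq_zero_or_pos k with h | h
      · simp [h]
      · have : (0:ℝ) ≤ Real.log k / k := by
          apply div_nonneg (Real.log_nonneg (by exact_mod_cast h)) (by positivity)
        rw [norm_mul, norm_pow, norm_neg, norm_one, one_pow, one_mul,
          Real.norm_of_nonneg this]
    have hexp : Tendsto (fun k : ℕ => C * Real.exp ((-1 : ℝ) ^ k * (Real.log k / (k : ℝ))))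
        atTop (𝓝 C) := by
      have := (Real.continuous_exp.tendsto 0).comp hlog
      rw [Real.exp_zero] at this
      simpa using (tendsto_const_nhds (x := C)).mul this
    apply hexp.congr'
    filter_upwards [eventually_ge_atTop 1] with k hk
    have hk0 : (0:ℝ) < k := by exact_mod_cast hk
    have hk0' : ((k:ℝ)) ≠ 0 := hk0.ne'
    have h1 : (0:ℝ) ≤ C ^ k := by positivity
    have h2 : (0:ℝ) ≤ (k:ℝ) ^ ((-1:ℝ) ^ k) := Real.rpow_nonneg hk0.le _
    rw [Real.mul_rpow h1 h2, ← Real.rpow_natCast C k, ← Real.rpow_mul hC0.le,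
      mul_one_div, div_self hk0', Real.rpow_one, ← Real.rpow_mul hk0.le,
      Real.rpow_def_of_pos hk0]
    ring_nf
  · rintro ⟨M, hM⟩
    obtain ⟨n, hn⟩ := exists_nat_gt (M / C)
    set k : ℕ := 2 * n + 1 with hk
    have hk1 : 1 ≤ k := by omega
    have hkpos : (0 : ℝ) < k := by positivity
    have hodd : ((-1 : ℝ)) ^ k = -1 := Odd.neg_one_pow ⟨n, by omega⟩
    have heven : ((-1 : ℝ)) ^ (k + 1) = 1 := Even.neg_one_pow ⟨n + 1, by omega⟩
    have hval : (C ^ (k + 1 : ℕ) * ((k : ℝ) + 1) ^ ((-1 : ℝ) ^ (k + 1))) /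
          (C ^ (k : ℕ) * (k : ℝ) ^ ((-1 : ℝ) ^ k)) = C * ((k : ℝ) + 1) * k := by
      rw [hodd, heven, Real.rpow_one, Real.rpow_neg_one, pow_succ]
      field_simp
    have h1 : C * ((k : ℝ) + 1) * k ≤ M := hval ▸ hM k hk1
    have h2 : M < C * (k : ℝ) := by
      rw [div_lt_iff₀ hC0] at hn
      have : (n : ℝ) ≤ (k : ℝ) := by exact_mod_cast Nat.le_of_lt (by omega)
      nlinarith
    have hk1' : (1:ℝ) ≤ k := by exact_mod_cast hk1
    have h3 : C * (k:ℝ) ≤ C * ((k:ℝ) + 1) * k := by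
      nlinarith [mul_pos (mul_pos hC0 hkpos) hkpos]
    linarith
end

section
/- Let s > 0, C_0 > 0, and let (v_k) be a sequence of positive reals tending to infinity satisfying v_{k+1} = v_k + C_0 v_k^{−s} + o(v_k^{−s}) as k → ∞. Then v_k / k^{1/(s+1)} → ((s+1) C_0)^{1/(s+1)} as k → ∞. -/
open Filter Topology

/-- Asymptotics of the recurrence `v_{k+1} = v_k + C₀ v_k^{-s} + o(v_k^{-s})`:
`v_k / k^{1/(s+1)} → ((s+1) C₀)^{1/(s+1)}`. -/
theorem recurrence_asymptotics
    (s : ℝ) (hs : 0 < s) (C₀ : ℝ) (hC₀ : 0 < C₀)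
    (v : ℕ → ℝ) (hvpos : ∀ k, 0 < v k)
    (hvinf : Tendsto v atTop atTop)
    (hrec : Tendsto (fun k => (v (k + 1) - v k - C₀ * (v k) ^ (-s)) * (v k) ^ s)
      atTop (𝓝 0)) :
    Tendsto (fun k : ℕ => v k / (k : ℝ) ^ (1 / (s + 1)))
      atTop (𝓝 (((s + 1) * C₀) ^ (1 / (s + 1)))) := by
  have hs1 : (0:ℝ) < s + 1 := by linarith
  set ε : ℕ → ℝ := fun k => (v (k + 1) - v k - C₀ * (v k) ^ (-s)) * (v k) ^ s with hεdef
  have hε0 : Tendsto ε atTop (𝓝 0) := hrec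
  set δ : ℕ → ℝ := fun k => (C₀ + ε k) * (v k) ^ (-(s+1)) with hδdef
  have hvne : ∀ k, v k ≠ 0 := fun k => (hvpos k).ne'
  -- v (k+1) = v k * (1 + δ k)
  have hstep : ∀ k, v (k + 1) = v k * (1 + δ k) := by
    intro k
    have h1 : (v k) ^ s * (v k) ^ (-s) = 1 := by
      rw [← Real.rpow_add (hvpos k)]; simp
    have h2 : v k * (v k) ^ (-(s+1)) = (v k) ^ (-s) := by
      nth_rewrite 1 [← Real.rpow_one (v k)]
      rw [← Real.rpow_add (hvpos k)]
      congr 1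
      ring
    have : ε k * (v k) ^ (-s) = v (k+1) - v k - C₀ * (v k) ^ (-s) := by
      rw [hεdef]
      have := h1
      field_simp
      rw [mul_comm, ← mul_assoc, h1, one_mul]
    rw [hδdef]
    simp only []
    have expand : v k * (1 + (C₀ + ε k) * (v k) ^ (-(s+1)))
        = v k + (C₀ + ε k) * ((v k) * (v k) ^ (-(s+1))) := by ring
    rw [expand, h2]
    have : (C₀ + ε k) * (v k) ^ (-s) = C₀ * (v k) ^ (-s) + ε k * (v k) ^ (-s) := by ring
    rw [this]
    rw [show ε k * (v k) ^ (-s) = v (k+1) - v k - C₀ * (v k) ^ (-s) from by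
      rw [hεdef]; dsimp only; rw [mul_assoc, h1, mul_one]]
    ring
  have hδpos : ∀ k, 0 < 1 + δ k := by
    intro k
    have := hstep k
    have h := hvpos (k+1)
    rw [this] at h
    rcases mul_pos_iff.mp h with ⟨_, h2⟩ | ⟨h1, _⟩
    · exact h2
    · exact absurd h1 (not_lt.mpr (hvpos k).le)
  -- helper function h
  set g : ℝ → ℝ := fun x => if x = 0 then s + 1 else ((1+x) ^ (s+1) - 1) / x with hgdef
  have hkey : ∀ k, (v (k+1)) ^ (s+1) - (v k) ^ (s+1) = (C₀ + ε k) * g (δ k) := by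
    intro k
    have hvδ : (v k) ^ (s+1) * δ k = C₀ + ε k := by
      rw [hδdef]
      dsimp only
      rw [show (v k) ^ (s+1) * ((C₀ + ε k) * (v k) ^ (-(s+1)))
          = (C₀ + ε k) * ((v k) ^ (s+1) * (v k) ^ (-(s+1))) from by ring]
      rw [← Real.rpow_add (hvpos k)]
      rw [show s + 1 + -(s+1) = 0 by ring, Real.rpow_zero, mul_one]
    have hexp : (v (k+1)) ^ (s+1) = (v k) ^ (s+1) * (1 + δ k) ^ (s+1) := by
      rw [hstep k, Real.mul_rpow (hvpos k).le (hδpos k).le]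
    by_cases hδ0 : δ k = 0
    · have hC : C₀ + ε k = 0 := by rw [← hvδ, hδ0, mul_zero]
      rw [hexp, hδ0, hC]
      simp
    · rw [hexp, hgdef]
      simp only [if_neg hδ0]
      rw [← hvδ]
      field_simp
  -- continuity of g at 0
  have hgcont : Tendsto g (𝓝 0) (𝓝 (s+1)) := by
    have hd : HasDerivAt (fun x : ℝ => (1+x) ^ (s+1)) (s+1) 0 := by
      have h1 : HasDerivAt (fun x : ℝ => 1 + x) 1 0 := by
        simpa using (hasDerivAt_id (0:ℝ)).const_add 1
      have h2 := (Real.hasDerivAt_rpow_const (x := (1:ℝ)+0) (p := s+1)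
        (Or.inl (by norm_num))).comp (0:ℝ) h1
      simpa [Function.comp_def] using h2
    rw [hasDerivAt_iff_tendsto_slope] at hd
    rw [← nhdsNE_sup_pure (0:ℝ), tendsto_sup]
    constructor
    · refine hd.congr' ?_
      filter_upwards [self_mem_nhdsWithin] with x hx
      simp only [Set.mem_compl_iff, Set.mem_singleton_iff] at hx
      rw [hgdef]
      simp [slope_fun_def, hx, div_eq_inv_mul]
    · rw [tendsto_pure_left]
      intro t ht
      rw [hgdef]
      simpa using mem_of_mem_nhds ht
  -- δ → 0
  have hδ0 : Tendsto δ atTop (𝓝 0) := by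
    have h1 : Tendsto (fun k => (v k) ^ (-(s+1))) atTop (𝓝 0) :=
      (tendsto_rpow_neg_atTop hs1).comp hvinf
    have h2 := ((tendsto_const_nhds (x := C₀)).add hε0).mul h1
    rw [show (C₀ + 0) * (0:ℝ) = 0 by ring] at h2
    exact h2
  -- differences tend to (s+1)*C₀
  have hdiff : Tendsto (fun k => (v (k+1)) ^ (s+1) - (v k) ^ (s+1)) atTop
      (𝓝 ((s+1) * C₀)) := by
    have := ((tendsto_const_nhds (x := C₀)).add hε0).mul (hgcont.comp hδ0)
    rw [show (C₀ + 0) * (s+1) = (s+1) * C₀ by ring] at this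
    exact Tendsto.congr (fun k => (hkey k).symm) this
  -- Cesàro
  have hcesaro : Tendsto (fun n : ℕ =>
      (∑ i ∈ Finset.range n, ((v (i+1)) ^ (s+1) - (v i) ^ (s+1))) / n) atTop
      (𝓝 ((s+1) * C₀)) := hdiff.cesaro.congr fun n => by rw [div_eq_inv_mul]
  have hsum : ∀ n : ℕ, (∑ i ∈ Finset.range n, ((v (i+1)) ^ (s+1) - (v i) ^ (s+1)))
      = (v n) ^ (s+1) - (v 0) ^ (s+1) := fun n =>
    Finset.sum_range_sub (fun i => (v i) ^ (s+1)) n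
  have hwk : Tendsto (fun n : ℕ => (v n) ^ (s+1) / n) atTop (𝓝 ((s+1) * C₀)) := by
    have h1 : Tendsto (fun n : ℕ => ((v n) ^ (s+1) - (v 0) ^ (s+1)) / n) atTop
        (𝓝 ((s+1) * C₀)) := by
      refine hcesaro.congr fun n => by rw [hsum n]
    have h2 : Tendsto (fun n : ℕ => (v 0) ^ (s+1) / n) atTop (𝓝 0) :=
      tendsto_const_nhds.div_atTop tendsto_natCast_atTop_atTop
    have := h1.add h2
    rw [add_zero] at this
    refine this.congr fun n => by ring
  -- apply x ↦ x ^ (1/(s+1))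
  have hL : ((s+1) * C₀) ≠ 0 := by positivity
  have hcont : ContinuousAt (fun x : ℝ => x ^ (1/(s+1))) ((s+1) * C₀) :=
    Real.continuousAt_rpow_const _ _ (Or.inl hL)
  have hfinal := hcont.tendsto.comp hwk
  refine hfinal.congr' ?_
  filter_upwards [eventually_ge_atTop 1] with k hk
  have hk0 : (0:ℝ) < (k:ℝ) := by exact_mod_cast hk
  simp only [Function.comp]
  rw [Real.div_rpow (Real.rpow_nonneg (hvpos k).le _) hk0.le]
  rw [← Real.rpow_mul (hvpos k).le, mul_one_div, div_self hs1.ne', Real.rpow_one]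
end

section
/- Let s > 0, C_0 > 0, and let (u_k) be positive reals with u_k → 0 satisfying u_{k+1} = u_k (1 − C_0 (−ln u_k)^{−s} + o((−ln u_k)^{−s})). Then lim_{k→∞} u_k^{1/k^{1/(s+1)}} = exp(−((s+1) C_0)^{1/(s+1)}). -/
open Filter Topology

lemma cesaro_diff {a : ℕ → ℝ} {A : ℝ}
    (h : Tendsto (fun k => a (k + 1) - a k) atTop (𝓝 A)) :
    Tendsto (fun k : ℕ => a k / k) atTop (𝓝 A) := by
  have h1 := h.cesaro
  have h2 : (fun n : ℕ => (n : ℝ)⁻¹ * ∑ i ∈ Finset.range n, (a (i + 1) - a i))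
      = fun n : ℕ => (a n - a 0) / n := by
    funext n
    rw [Finset.sum_range_sub]
    ring
  rw [h2] at h1
  have h3 : Tendsto (fun n : ℕ => a 0 / n) atTop (𝓝 0) :=
    tendsto_const_nhds.div_atTop tendsto_natCast_atTop_atTop
  have h4 := h1.add h3
  simp only [add_zero] at h4
  convert h4 using 2 with n
  ring

/-- Fractional-power QUP-order from the error recurrence
`u_{k+1} = u_k (1 - C₀(-ln u_k)^{-s} + o((-ln u_k)^{-s}))`. -/
theorem fractional_power_qup_order
    (s : ℝ) (hs : 0 < s) (C₀ : ℝ) (hC₀ : 0 < C₀)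
    (u : ℕ → ℝ) (hupos : ∀ k, 0 < u k) (hu1 : ∀ k, u k < 1)
    (hu0 : Tendsto u atTop (𝓝 0))
    (hrec : Tendsto
      (fun k => (u (k + 1) / u k - (1 - C₀ * (-Real.log (u k)) ^ (-s))) *
        (-Real.log (u k)) ^ s) atTop (𝓝 0)) :
    Tendsto (fun k : ℕ => (u k) ^ (1 / (k : ℝ) ^ (1 / (s + 1))))
      atTop (𝓝 (Real.exp (-((s + 1) * C₀) ^ (1 / (s + 1))))) := by
  set L : ℕ → ℝ := fun k => -Real.log (u k) with hLdef
  have hL : ∀ k, 0 < L k := fun k => by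
    have := Real.log_neg (hupos k) (hu1 k)
    simp only [hLdef]; linarith
  have hLne : ∀ k, L k ≠ 0 := fun k => (hL k).ne'
  have hLspos : ∀ k, 0 < L k ^ s := fun k => Real.rpow_pos_of_pos (hL k) s
  -- L → ∞
  have hLtop : Tendsto L atTop atTop := by
    have : Tendsto (fun k => Real.log (u k)) atTop atBot := by
      apply Real.tendsto_log_nhdsGT_zero.comp
      rw [tendsto_nhdsWithin_iff]
      exact ⟨hu0, Eventually.of_forall fun k => hupos k⟩
    exact tendsto_neg_atTop_iff.mpr this
  -- δ k := u(k+1)/u k - 1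
  set δ : ℕ → ℝ := fun k => u (k + 1) / u k - 1 with hδdef
  have hδs : Tendsto (fun k => δ k * L k ^ s) atTop (𝓝 (-C₀)) := by
    have key : ∀ k, δ k * L k ^ s =
        (u (k + 1) / u k - (1 - C₀ * L k ^ (-s))) * L k ^ s - C₀ := by
      intro k
      have h1 : L k ^ (-s) * L k ^ s = 1 := by
        rw [← Real.rpow_add (hL k)]; simp
      simp only [hδdef]
      ring_nf
      nlinarith [h1]
    have := hrec.sub_const C₀
    simp only [zero_sub] at this
    exact this.congr fun k => (key k).symm
  -- δ → 0
  have hδ0 : Tendsto δ atTop (𝓝 0) := by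
    have h1 : Tendsto (fun k => L k ^ (-s)) atTop (𝓝 0) :=
      (tendsto_rpow_neg_atTop hs).comp hLtop
    have h2 := hδs.mul h1
    rw [mul_zero] at h2
    refine h2.congr fun k => ?_
    rw [mul_assoc, ← Real.rpow_add (hL k)]
    simp
  -- eventually δ < 0
  have hδneg : ∀ᶠ k in atTop, δ k < 0 := by
    filter_upwards [hδs.eventually_lt_const (by linarith : -C₀ < 0)] with k hk
    by_contra h
    push_neg at h
    nlinarith [hLspos k]
  -- 1 + δ k > 0
  have h1δ : ∀ k, 0 < 1 + δ k := fun k => by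
    have : 0 < u (k + 1) / u k := div_pos (hupos (k + 1)) (hupos k)
    simp only [hδdef]; linarith
  -- d k = L(k+1) - L k = -log(1 + δ k)
  have hdlog : ∀ k, L (k + 1) - L k = -Real.log (1 + δ k) := fun k => by
    have h1 : (1 : ℝ) + δ k = u (k + 1) / u k := by simp [hδdef]
    rw [h1, Real.log_div (hupos (k + 1)).ne' (hupos k).ne']
    simp only [hLdef]; ring
  -- log(1+δ)/δ → 1
  have hslope_log : Tendsto (fun k => Real.log (1 + δ k) / δ k) atTop (𝓝 1) := by
    have hderiv : HasDerivAt Real.log 1 1 := by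
      simpa using Real.hasDerivAt_log one_ne_zero
    have h1 := hasDerivAt_iff_tendsto_slope.mp hderiv
    have h2 : Tendsto (fun k => 1 + δ k) atTop (𝓝[≠] (1 : ℝ)) := by
      rw [tendsto_nhdsWithin_iff]
      constructor
      · simpa using tendsto_const_nhds.add hδ0
      · filter_upwards [hδneg] with k hk
        simp only [Set.mem_compl_iff, Set.mem_singleton_iff]
        intro h; linarith [congrArg (· - 1) h]
    have h3 := h1.comp h2
    refine h3.congr fun k => ?_
    simp [Function.comp, slope_def_field, Real.log_one]
  -- (L(k+1) - L k) * L k^s → C₀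
  have hd : Tendsto (fun k => (L (k + 1) - L k) * L k ^ s) atTop (𝓝 C₀) := by
    have h1 := (hslope_log.neg).mul hδs
    have h2 : (-1 : ℝ) * -C₀ = C₀ := by ring
    rw [h2] at h1
    refine h1.congr' ?_
    filter_upwards [hδneg] with k hk
    rw [hdlog k]
    have gen : ∀ (A d B : ℝ), d ≠ 0 → -(A / d) * (d * B) = -A * B := by
      intros A d B hd; field_simp
    exact gen _ _ _ hk.ne
  -- t k := (L(k+1) - L k)/L k → 0
  have hLs1top : Tendsto (fun k => L k ^ (s + 1)) atTop atTop :=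
    (tendsto_rpow_atTop (by linarith : (0:ℝ) < s + 1)).comp hLtop
  set t : ℕ → ℝ := fun k => (L (k + 1) - L k) / L k with htdef
  have ht0 : Tendsto t atTop (𝓝 0) := by
    have h1 := hd.div_atTop hLs1top
    refine h1.congr fun k => ?_
    rw [Real.rpow_add (hL k), Real.rpow_one]
    have gen : ∀ (A B C : ℝ), B ≠ 0 → A * B / (B * C) = A / C := by
      intros A B C hB
      rcases eq_or_ne C 0 with rfl | hC
      · simp
      · field_simp
    exact gen _ _ _ (hLspos k).ne'
  -- eventually t > 0
  have htpos : ∀ᶠ k in atTop, 0 < t k := by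
    filter_upwards [hd.eventually_const_lt (by linarith : (0:ℝ) < C₀)] with k hk
    have hdk : 0 < L (k + 1) - L k := by
      by_contra h
      push_neg at h
      nlinarith [hLspos k]
    exact div_pos hdk (hL k)
  -- ((1+t)^{s+1} - 1)/t → s+1
  have hslope_pow : Tendsto (fun k => ((1 + t k) ^ (s + 1) - 1) / t k) atTop (𝓝 (s + 1)) := by
    have hderiv : HasDerivAt (fun x : ℝ => x ^ (s + 1)) (s + 1) 1 := by
      have := Real.hasDerivAt_rpow_const (x := 1) (p := s + 1) (Or.inl one_ne_zero)
      simpa using this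
    have h1 := hasDerivAt_iff_tendsto_slope.mp hderiv
    have h2 : Tendsto (fun k => 1 + t k) atTop (𝓝[≠] (1 : ℝ)) := by
      rw [tendsto_nhdsWithin_iff]
      constructor
      · simpa using tendsto_const_nhds.add ht0
      · filter_upwards [htpos] with k hk
        simp only [Set.mem_compl_iff, Set.mem_singleton_iff]
        intro h; linarith [congrArg (· - 1) h]
    have h3 := h1.comp h2
    refine h3.congr fun k => ?_
    simp [Function.comp, slope_def_field, Real.one_rpow]
  -- L(k+1)^{s+1} - L k^{s+1} → (s+1)C₀
  have hpowdiff : Tendsto (fun k => L (k + 1) ^ (s + 1) - L k ^ (s + 1)) atTop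
      (𝓝 ((s + 1) * C₀)) := by
    have h1 := hslope_pow.mul hd
    refine h1.congr' ?_
    filter_upwards [htpos] with k hk
    have htne : t k ≠ 0 := hk.ne'
    have hLk1 : L (k + 1) = L k * (1 + t k) := by
      have gen : ∀ (A B : ℝ), B ≠ 0 → B * (1 + (A - B) / B) = A := by
        intros A B hB; field_simp; ring
      exact (gen (L (k + 1)) (L k) (hLne k)).symm
    have h2 : L (k + 1) ^ (s + 1) = L k ^ (s + 1) * (1 + t k) ^ (s + 1) := by
      rw [hLk1, Real.mul_rpow (hL k).le (by positivity)]
    rw [h2]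
    have h3 : (L (k + 1) - L k) * L k ^ s = t k * L k ^ (s + 1) := by
      rw [Real.rpow_add (hL k), Real.rpow_one]
      have gen : ∀ (A B C : ℝ), C ≠ 0 → A / C * (B * C) = A * B := by
        intros A B C hC; field_simp
      exact (gen _ _ _ (hLne k)).symm
    rw [h3]
    have gen : ∀ (A d B : ℝ), d ≠ 0 → (A - 1) / d * (d * B) = B * A - B := by
      intros A d B hd; field_simp
    exact gen _ _ _ htne
  -- Cesàro
  have hC : Tendsto (fun k : ℕ => L k ^ (s + 1) / k) atTop (𝓝 ((s + 1) * C₀)) :=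
    cesaro_diff hpowdiff
  -- L k / k^{1/(s+1)} → ((s+1)C₀)^{1/(s+1)}
  have hfin : Tendsto (fun k : ℕ => L k / (k : ℝ) ^ (1 / (s + 1))) atTop
      (𝓝 (((s + 1) * C₀) ^ (1 / (s + 1)))) := by
    have h1 := hC.rpow_const (Or.inr (by positivity : (0:ℝ) ≤ 1 / (s + 1)))
    refine h1.congr' ?_
    filter_upwards [eventually_ge_atTop 1] with k hk
    have hkpos : (0 : ℝ) < k := by exact_mod_cast hk
    rw [Real.div_rpow (Real.rpow_nonneg (hL k).le _) hkpos.le,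
      ← Real.rpow_mul (hL k).le, mul_one_div_cancel (by linarith : s + 1 ≠ 0),
      Real.rpow_one]
  -- conclude
  have hexp := (Real.continuous_exp.tendsto _).comp hfin.neg
  refine hexp.congr' ?_
  filter_upwards [eventually_ge_atTop 1] with k hk
  have hkpos : (0 : ℝ) < k := by exact_mod_cast hk
  rw [Function.comp_apply, Real.rpow_def_of_pos (hupos k)]
  congr 1
  have : Real.log (u k) = -L k := by simp [hLdef]
  rw [this]
  ring
end

section
/- For every integer K ≥ 2 and every ν ∈ (0,1], the polynomial equation q^K = q^{K−1} + q^{K−2} + ⋯ + q + ν has a unique root q_K(ν) in (1, 2), and q_K(ν) is strictly increasing in ν. -/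
open Filter Topology Finset

noncomputable def charPsi (K : ℕ) (ν : ℝ) (x : ℝ) : ℝ :=
  (∑ i ∈ Finset.range (K - 1), x ^ (K - 1 - i)) + ν * x ^ K

lemma charPsi_lt (K : ℕ) (ν : ℝ) (hν : 0 < ν) {x y : ℝ} (hx : 0 ≤ x) (hxy : x < y)
    (hK : 1 ≤ K) : charPsi K ν x < charPsi K ν y := by
  unfold charPsi
  refine add_lt_add_of_le_of_lt (Finset.sum_le_sum fun i hi => ?_) ?_
  · exact pow_le_pow_left₀ hx hxy.le _
  · exact mul_lt_mul_of_pos_left (pow_lt_pow_left₀ hxy hx (by omega)) hν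

lemma charPsi_nu_lt (K : ℕ) {ν₁ ν₂ : ℝ} (hν : ν₁ < ν₂) {x : ℝ} (hx : 0 < x) :
    charPsi K ν₁ x < charPsi K ν₂ x := by
  unfold charPsi
  exact add_lt_add_right (mul_lt_mul_of_pos_right hν (pow_pos hx _)) _

lemma charPsi_key (K : ℕ) (ν : ℝ) {q : ℝ} (hq : 0 < q) :
    q ^ K * charPsi K ν q⁻¹ = (∑ i ∈ Finset.range (K - 1), q ^ (i + 1)) + ν := by
  unfold charPsi
  rw [mul_add, Finset.mul_sum]
  congr 1
  · refine Finset.sum_congr rfl fun i hi => ?_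
    rw [Finset.mem_range] at hi
    rw [inv_pow, ← pow_sub₀ q hq.ne' (by omega : K - 1 - i ≤ K)]
    congr 1
    omega
  · rw [inv_pow]
    field_simp

lemma charPsi_root (K : ℕ) (ν : ℝ) {q : ℝ} (hq : 1 < q)
    (h : q ^ K = (∑ i ∈ Finset.range (K - 1), q ^ (i + 1)) + ν) :
    charPsi K ν q⁻¹ = 1 := by
  have h0 : (0:ℝ) < q := lt_trans one_pos hq
  have := charPsi_key K ν h0
  rw [← h] at this
  have hpow : q ^ K ≠ 0 := pow_ne_zero _ h0.ne'
  exact mul_left_cancel₀ hpow (this.trans (mul_one _).symm)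

lemma charPsi_geo (n : ℕ) : (∑ i ∈ Finset.range n, ((2:ℝ)⁻¹) ^ (n - i)) = 1 - (2⁻¹) ^ n := by
  induction n with
  | zero => simp
  | succ n ih =>
    rw [Finset.sum_range_succ' (fun i => ((2:ℝ)⁻¹) ^ (n + 1 - i)) n]
    simp only [Nat.succ_sub_succ]
    rw [ih, Nat.sub_zero, pow_succ]
    ring

lemma charPsi_half_lt (K : ℕ) (hK : 2 ≤ K) {ν : ℝ} (hν1 : ν ≤ 1) :
    charPsi K ν 2⁻¹ < 1 := by
  unfold charPsi
  rw [charPsi_geo (K - 1)]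
  have hp : (0:ℝ) < 2⁻¹ ^ (K - 1) := by positivity
  have hKe : ((2:ℝ)⁻¹) ^ K = 2⁻¹ ^ (K - 1) * 2⁻¹ := by
    rw [← pow_succ]; congr 1; omega
  nlinarith [hp, hKe]

lemma charPsi_one_gt (K : ℕ) (hK : 2 ≤ K) {ν : ℝ} (hν0 : 0 < ν) :
    1 < charPsi K ν 1 := by
  unfold charPsi
  simp only [one_pow, mul_one, Finset.sum_const, Finset.card_range, nsmul_eq_mul, mul_one]
  have : (1:ℝ) ≤ ((K - 1 : ℕ) : ℝ) := by exact_mod_cast Nat.one_le_iff_ne_zero.2 (by omega)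
  linarith

/-- The characteristic equation `q^K = q^{K-1} + ⋯ + q + ν` has a unique root in `(1,2)`,
and this root is strictly increasing in `ν`. -/
theorem char_root_exists_unique_monotone (K : ℕ) (hK : 2 ≤ K) :
    (∀ ν : ℝ, 0 < ν → ν ≤ 1 →
      ∃! q : ℝ, q ∈ Set.Ioo (1 : ℝ) 2 ∧
        q ^ K = (∑ i ∈ Finset.range (K - 1), q ^ (i + 1)) + ν) ∧
    (∀ ν₁ ν₂ q₁ q₂ : ℝ, 0 < ν₁ → ν₁ ≤ 1 → 0 < ν₂ → ν₂ ≤ 1 → ν₁ < ν₂ →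
      q₁ ∈ Set.Ioo (1 : ℝ) 2 →
      q₁ ^ K = (∑ i ∈ Finset.range (K - 1), q₁ ^ (i + 1)) + ν₁ →
      q₂ ∈ Set.Ioo (1 : ℝ) 2 →
      q₂ ^ K = (∑ i ∈ Finset.range (K - 1), q₂ ^ (i + 1)) + ν₂ →
      q₁ < q₂) := by
  have hK1 : 1 ≤ K := by omega
  constructor
  · intro ν hν0 hν1
    have hcont : ContinuousOn (charPsi K ν) (Set.Icc (2⁻¹:ℝ) 1) := by
      apply Continuous.continuousOn
      unfold charPsi
      exact (continuous_finset_sum _ fun i _ => continuous_pow _).add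
        (continuous_const.mul (continuous_pow K))
    have hmem : (1:ℝ) ∈ Set.Ioo (charPsi K ν 2⁻¹) (charPsi K ν 1) :=
      ⟨charPsi_half_lt K hK hν1, charPsi_one_gt K hK hν0⟩
    obtain ⟨x, hx, hpsix⟩ := intermediate_value_Ioo (by norm_num : (2⁻¹:ℝ) ≤ 1) hcont hmem
    have hx0 : 0 < x := lt_trans (by norm_num) hx.1
    have hxi : 0 < x⁻¹ := inv_pos.2 hx0
    have hxx : x⁻¹ * x = 1 := inv_mul_cancel₀ hx0.ne'
    have hq1 : 1 < x⁻¹ := by nlinarith [mul_pos hxi (sub_pos.2 hx.2)]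
    have hq2 : x⁻¹ < 2 := by nlinarith [mul_pos hxi (sub_pos.2 hx.1)]
    refine ⟨x⁻¹, ⟨⟨hq1, hq2⟩, ?_⟩, ?_⟩
    · have h := charPsi_key K ν hxi
      rw [inv_inv, hpsix, mul_one] at h
      exact h
    · rintro q ⟨⟨hq1', hq2'⟩, heq⟩
      have hroot := charPsi_root K ν hq1' heq
      have hq0 : 0 < q := lt_trans one_pos hq1'
      have hxeq : q⁻¹ = x := by
        by_contra hne
        rcases lt_or_gt_of_ne hne with h | h
        · have := charPsi_lt K ν hν0 (by positivity) h hK1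
          rw [hroot, hpsix] at this; exact lt_irrefl 1 this
        · have := charPsi_lt K ν hν0 (by positivity : (0:ℝ) ≤ x) h hK1
          rw [hroot, hpsix] at this; exact lt_irrefl 1 this
      rw [← hxeq, inv_inv]
  · intro ν₁ ν₂ q₁ q₂ h10 h11 h20 h21 hνν hq1 he1 hq2 he2
    have r1 := charPsi_root K ν₁ hq1.1 he1
    have r2 := charPsi_root K ν₂ hq2.1 he2
    by_contra hle
    push_neg at hle
    have h01 : 0 < q₁ := lt_trans one_pos hq1.1
    have h02 : 0 < q₂ := lt_trans one_pos hq2.1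
    have hinv : q₁⁻¹ ≤ q₂⁻¹ := by gcongr
    have step1 : charPsi K ν₁ q₁⁻¹ ≤ charPsi K ν₁ q₂⁻¹ := by
      rcases eq_or_lt_of_le hinv with h | h
      · rw [h]
      · exact (charPsi_lt K ν₁ h10 (by positivity) h hK1).le
    have step2 : charPsi K ν₁ q₂⁻¹ < charPsi K ν₂ q₂⁻¹ := charPsi_nu_lt K hνν (inv_pos.2 h02)
    linarith
end

section
/- Let g : ℝ → ℝ be differentiable at a fixed point x_* = g(x_*) with 0 < |g'(x_*)| < 1. Then for any x_0 sufficiently close to x_* with x_0 ≠ x_*, the iterates x_{k+1} = g(x_k) converge to x_* and satisfy lim_{k→∞} |x_k − x_*|^{1/k} = |g'(x_*)|. -/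
open Filter Topology

/-- Scalar fixed-point iteration: if `g` is differentiable at `x_* = g(x_*)` with
`0 < |g'(x_*)| < 1`, then for `x₀ ≠ x_*` sufficiently close to `x_*` the iterates
`x_{k+1} = g(x_k)` converge to `x_*` with `|x_k - x_*|^{1/k} → |g'(x_*)|`. -/
theorem fixed_point_qup_linear
    (g : ℝ → ℝ) (xstar d : ℝ)
    (hfix : g xstar = xstar)
    (hderiv : HasDerivAt g d xstar)
    (hd0 : 0 < |d|) (hd1 : |d| < 1) :
    ∃ δ > 0, ∀ x₀ : ℝ, x₀ ≠ xstar → |x₀ - xstar| < δ →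
      Tendsto (fun k : ℕ => g^[k] x₀) atTop (𝓝 xstar) ∧
      Tendsto (fun k : ℕ => |g^[k] x₀ - xstar| ^ (1 / (k : ℝ))) atTop (𝓝 |d|) := by
  have hO : (fun x => g x - g xstar - (x - xstar) * d) =o[𝓝 xstar]
      (fun x => x - xstar) := by
    have := hasDerivAt_iff_isLittleO.mp hderiv
    simpa [smul_eq_mul] using this
  set ε₀ : ℝ := min (|d|/2) ((1-|d|)/2) with hε₀def
  have hε₀ : 0 < ε₀ := lt_min (by linarith) (by linarith)
  have hε₀d : ε₀ < |d| := lt_of_le_of_lt (min_le_left _ _) (by linarith)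
  have hr1 : |d| + ε₀ < 1 := by
    have := min_le_right (|d|/2) ((1-|d|)/2)
    linarith
  obtain ⟨δ, hδ, hball⟩ := Metric.eventually_nhds_iff.mp (hO.def hε₀)
  refine ⟨δ, hδ, fun x₀ hx0ne hx0δ => ?_⟩
  have key : ∀ x : ℝ, |x - xstar| < δ →
      |g x - xstar| ≤ (|d| + ε₀) * |x - xstar| ∧
      (|d| - ε₀) * |x - xstar| ≤ |g x - xstar| := by
    intro x hx
    have h := hball (show dist x xstar < δ by simpa [Real.dist_eq] using hx)
    rw [hfix] at h
    have h' : |g x - xstar - (x - xstar) * d| ≤ ε₀ * |x - xstar| := by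
      simpa [Real.norm_eq_abs] using h
    have habs : |(x - xstar) * d| = |x - xstar| * |d| := abs_mul _ _
    constructor
    · have h1 : |g x - xstar| ≤ |(x - xstar) * d| + |g x - xstar - (x - xstar) * d| := by
        have := abs_add_le ((x - xstar) * d) (g x - xstar - (x - xstar) * d)
        simpa using this
      nlinarith [h1, h']
    · have h2 : |(x - xstar) * d| - |g x - xstar| ≤ |(x - xstar) * d - (g x - xstar)| :=
        abs_sub_abs_le_abs_sub _ _
      have h4 : |(x - xstar) * d - (g x - xstar)| = |g x - xstar - (x - xstar) * d| :=
        abs_sub_comm _ _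
      nlinarith [h2, h', h4]
  -- invariant
  have inv : ∀ k : ℕ, |g^[k] x₀ - xstar| < δ ∧ g^[k] x₀ ≠ xstar := by
    intro k
    induction k with
    | zero => exact ⟨by simpa using hx0δ, by simpa using hx0ne⟩
    | succ k ih =>
      obtain ⟨h1, h2⟩ := ih
      obtain ⟨hup, hlo⟩ := key _ h1
      have hpos : 0 < |g^[k] x₀ - xstar| := abs_pos.mpr (sub_ne_zero.mpr h2)
      rw [Function.iterate_succ_apply']
      constructor
      · have : |g (g^[k] x₀) - xstar| < δ := by nlinarith
        exact this
      · intro hc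
        have hz : |g (g^[k] x₀) - xstar| = 0 := by rw [hc]; simp
        nlinarith
  have epos : ∀ k : ℕ, 0 < |g^[k] x₀ - xstar| :=
    fun k => abs_pos.mpr (sub_ne_zero.mpr (inv k).2)
  -- geometric bound and convergence
  have hgeo : ∀ k : ℕ, |g^[k] x₀ - xstar| ≤ (|d| + ε₀) ^ k * |x₀ - xstar| := by
    intro k
    induction k with
    | zero => simp
    | succ k ih =>
      rw [Function.iterate_succ_apply']
      calc |g (g^[k] x₀) - xstar| ≤ (|d| + ε₀) * |g^[k] x₀ - xstar| := (key _ (inv k).1).1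
        _ ≤ (|d| + ε₀) * ((|d| + ε₀) ^ k * |x₀ - xstar|) := by
            apply mul_le_mul_of_nonneg_left ih (by positivity)
        _ = (|d| + ε₀) ^ (k + 1) * |x₀ - xstar| := by ring
  have habs0 : Tendsto (fun k : ℕ => |g^[k] x₀ - xstar|) atTop (𝓝 0) := by
    apply squeeze_zero (fun k => abs_nonneg _) hgeo
    have := (tendsto_pow_atTop_nhds_zero_of_lt_one (by positivity) hr1).mul_const |x₀ - xstar|
    simpa using this
  have hconv : Tendsto (fun k : ℕ => g^[k] x₀) atTop (𝓝 xstar) := by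
    rw [tendsto_iff_dist_tendsto_zero]
    simpa [Real.dist_eq] using habs0
  refine ⟨hconv, ?_⟩
  -- ratio tends to |d|
  have hcomp := hO.comp_tendsto hconv
  have hratio : Tendsto (fun k : ℕ => |g^[k+1] x₀ - xstar| / |g^[k] x₀ - xstar|)
      atTop (𝓝 |d|) := by
    rw [Metric.tendsto_nhds]
    intro ε hε
    filter_upwards [hcomp.def (half_pos hε)] with k hk
    simp only [Function.comp] at hk
    have hk' : |g (g^[k] x₀) - xstar - (g^[k] x₀ - xstar) * d|
        ≤ ε/2 * |g^[k] x₀ - xstar| := by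
      simpa [Real.norm_eq_abs, hfix] using hk
    have hk'' : |g^[k+1] x₀ - xstar - (g^[k] x₀ - xstar) * d|
        ≤ ε/2 * |g^[k] x₀ - xstar| := by
      rw [Function.iterate_succ_apply']; exact hk'
    have hb := epos k
    have hnum : abs (|g^[k+1] x₀ - xstar| - |d| * |g^[k] x₀ - xstar|)
        ≤ ε/2 * |g^[k] x₀ - xstar| := by
      have h3 : abs (|g^[k+1] x₀ - xstar| - |(g^[k] x₀ - xstar) * d|)
          ≤ |g^[k+1] x₀ - xstar - (g^[k] x₀ - xstar) * d| :=
        abs_abs_sub_abs_le_abs_sub _ _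
      rw [abs_mul] at h3
      calc abs (|g^[k+1] x₀ - xstar| - |d| * |g^[k] x₀ - xstar|)
          = abs (|g^[k+1] x₀ - xstar| - |g^[k] x₀ - xstar| * |d|) := congrArg abs (by ring)
        _ ≤ |g^[k+1] x₀ - xstar - (g^[k] x₀ - xstar) * d| := h3
        _ ≤ ε/2 * |g^[k] x₀ - xstar| := hk''
    rw [Real.dist_eq]
    have heq : |g^[k+1] x₀ - xstar| / |g^[k] x₀ - xstar| - |d|
        = (|g^[k+1] x₀ - xstar| - |d| * |g^[k] x₀ - xstar|) / |g^[k] x₀ - xstar| := by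
      field_simp
    rw [heq, abs_div, abs_of_pos hb]
    calc abs (|g^[k+1] x₀ - xstar| - |d| * |g^[k] x₀ - xstar|) / |g^[k] x₀ - xstar|
        ≤ (ε/2 * |g^[k] x₀ - xstar|) / |g^[k] x₀ - xstar| := by
          gcongr
      _ = ε/2 := by field_simp
      _ < ε := by linarith
  -- logs
  have hlog : Tendsto (fun k : ℕ => Real.log |g^[k+1] x₀ - xstar|
      - Real.log |g^[k] x₀ - xstar|) atTop (𝓝 (Real.log |d|)) := by
    have := (Real.continuousAt_log (ne_of_gt hd0)).tendsto.comp hratio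
    refine this.congr fun k => ?_
    simp only [Function.comp]
    rw [Real.log_div (ne_of_gt (epos (k+1))) (ne_of_gt (epos k))]
  have hces := hlog.cesaro
  have hces' : Tendsto (fun n : ℕ => (n : ℝ)⁻¹ *
      (Real.log |g^[n] x₀ - xstar| - Real.log |g^[0] x₀ - xstar|)) atTop
      (𝓝 (Real.log |d|)) := by
    refine hces.congr fun n => ?_
    rw [Finset.sum_range_sub (f := fun i => Real.log |g^[i] x₀ - xstar|)]
    try simp [smul_eq_mul]
  have hzero : Tendsto (fun n : ℕ => (n : ℝ)⁻¹ * Real.log |g^[0] x₀ - xstar|)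
      atTop (𝓝 0) := by
    have := (tendsto_inv_atTop_nhds_zero_nat (𝕜 := ℝ)).mul_const (Real.log |g^[0] x₀ - xstar|)
    simpa using this
  have hloglim : Tendsto (fun n : ℕ => (n : ℝ)⁻¹ * Real.log |g^[n] x₀ - xstar|)
      atTop (𝓝 (Real.log |d|)) := by
    have := hces'.add hzero
    simp only [add_zero] at this
    refine this.congr fun n => ?_
    ring
  have hfinal := (Real.continuous_exp.tendsto _).comp hloglim
  rw [Real.exp_log hd0] at hfinal
  refine hfinal.congr fun n => ?_
  simp only [Function.comp]
  rw [Real.rpow_def_of_pos (epos n), mul_comm, one_div]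
end
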